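/- arXiv:2012.15388 — 9 statements merged into one kernel-verified Lean document; each statement's English description precedes it below -/
import Mathlib

section
/- Let k be a field, V a finite-dimensional k-vector space, and Γ a connected finite simply laced graph with vertex set I. Suppose for each vertex i we are given a rank-one projector p_i ∈ End_k(V) (so p_i ∘ p_i = p_i and the image of p_i is one-dimensional) such that: for every edge (i,j) of Γ there is a nonzero scalar r_{ij} ∈ k with p_i p_j p_i = r_{ij} · p_i and p_j p_i p_j = r_{ij} · p_j, and for every pair of distinct vertices i, j not joined by an edge, p_i p_j = p_j p_i = 0. Assume that either the images of all the projectors p_i span V, or the intersection of the kernels of all the p_i is zero. Then every invertible endomorphism g of V satisfying g ∘ p_i = p_i ∘ g for all i is a scalar, i.e. g = λ · id_V for some λ ∈ k, λ ≠ 0. -/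
/-!
Since `g` commutes with `p i`, it preserves the line `range (p i)` and so acts on it by a scalar
`c i`. For an edge `i — j`, the relation `p i * p j * p i = r • p i` with `r ≠ 0` forces
`p j * p i ≠ 0`, so `p j` carries a nonzero vector of `range (p i)`, which is an eigenvector of
`g` for `c i`, into `range (p j)`; hence `c i = c j`, and by connectedness all `c i` agree.
Then `g = c • 1` on the span of the ranges, and `g - c • 1` takes values in the common kernel.
-/

open Module Module.End LinearMap

theorem SimpleGraph.Reachable.eq_of_forall_adj {I β : Type*} {G : SimpleGraph I} {f : I → β}
    (hf : ∀ i j, G.Adj i j → f i = f j) {i j : I} (h : G.Reachable i j) : f i = f j := by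
  obtain ⟨w⟩ := h
  induction w with
  | nil => rfl
  | cons hadj _ ih => exact (hf _ _ hadj).trans ih

theorem mul_ne_zero_of_mul_mul_eq_smul {k A : Type*} [Field k] [Ring A] [Module k A]
    [NoZeroSMulDivisors k A] {a b : A} {r : k} (hr : r ≠ 0) (ha : a ≠ 0)
    (h : a * b * a = r • a) : b * a ≠ 0 := by
  intro hba
  rw [mul_assoc, hba, mul_zero, eq_comm, smul_eq_zero] at h
  tauto

theorem LinearMap.ne_zero_of_finrank_range_eq_one {R M N : Type*} [Ring R] [Nontrivial R]
    [AddCommGroup M] [Module R M] [AddCommGroup N] [Module R N] {f : M →ₗ[R] N}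
    (hf : finrank R (range f) = 1) : f ≠ 0 := by
  rintro rfl
  rw [range_zero, finrank_bot] at hf
  exact zero_ne_one hf

namespace Module.End

section CommRing

variable {R M ι : Type*} [CommRing R] [AddCommGroup M] [Module R M]
  {p : ι → End R M} {g : End R M} {c : R}

theorem eq_smul_one_of_iSup_range_eq_top (hc : ∀ i, range (p i) ≤ g.eigenspace c)
    (h : ⨆ i, range (p i) = ⊤) : g = c • 1 := by
  have htop : g.eigenspace c = ⊤ := top_le_iff.mp (h ▸ iSup_le hc)
  ext x
  simpa using mem_eigenspace_iff.mp (htop ▸ Submodule.mem_top : x ∈ g.eigenspace c)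

theorem eq_smul_one_of_iInf_ker_eq_bot (hc : ∀ i, range (p i) ≤ g.eigenspace c)
    (hg : ∀ i, Commute g (p i)) (h : ⨅ i, ker (p i) = ⊥) : g = c • 1 := by
  ext x
  have hx : g x - c • x ∈ ⨅ i, ker (p i) := by
    refine Submodule.mem_iInf _ |>.mpr fun i => ?_
    have hcomm : g (p i x) = p i (g x) := congr($(hg i) x)
    rw [mem_ker, map_sub, map_smul, ← hcomm, mem_eigenspace_iff.mp (hc i ⟨x, rfl⟩), sub_self]
  rw [h, Submodule.mem_bot, sub_eq_zero] at hx
  simpa using hx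

end CommRing

variable {k V : Type*} [Field k] [AddCommGroup V] [Module k V]

theorem exists_le_eigenspace_of_mapsTo {g : End k V} {W : Submodule k V}
    (hW : finrank k W = 1) (hgW : Set.MapsTo g W W) : ∃ c, W ≤ g.eigenspace c := by
  obtain ⟨c, hc, -⟩ := (g.restrict hgW).existsUnique_eq_smul_id_of_finrank_eq_one hW
  exact ⟨c, fun x hx => mem_eigenspace_iff.mpr congr(($hc ⟨x, hx⟩ : V))⟩

theorem exists_range_le_eigenspace_of_commute {f g : End k V} (hfg : Commute g f)
    (hf : finrank k (range f) = 1) : ∃ c, range f ≤ g.eigenspace c :=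
  exists_le_eigenspace_of_mapsTo hf <| by
    rintro _ ⟨x, rfl⟩
    exact ⟨g x, congr($hfg x).symm⟩

theorem eq_of_range_le_eigenspace {f₁ f₂ g : End k V} {c₁ c₂ : k}
    (h₁ : range f₁ ≤ g.eigenspace c₁) (h₂ : range f₂ ≤ g.eigenspace c₂) (hg : Commute g f₂)
    (h : f₂ * f₁ ≠ 0) : c₁ = c₂ := by
  obtain ⟨x, hx⟩ : ∃ x, f₂ (f₁ x) ≠ 0 := by
    by_contra! hx
    exact h (LinearMap.ext hx)
  have hv₁ : f₂ (f₁ x) ∈ g.eigenspace c₁ := mapsTo_genEigenspace_of_comm hg c₁ 1 (h₁ ⟨x, rfl⟩)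
  have hv₂ : f₂ (f₁ x) ∈ g.eigenspace c₂ := h₂ ⟨f₁ x, rfl⟩
  by_contra hc
  exact hx (Submodule.disjoint_def.mp (disjoint_genEigenspace g hc 1 1) _ hv₁ hv₂)

end Module.End

theorem configuration_automorphisms_are_scalars_general
    {k : Type*} [Field k] {V : Type*} [AddCommGroup V] [Module k V]
    {I : Type*} (G : SimpleGraph I) (hconn : G.Connected)
    (p : I → Module.End k V)
    (hrank : ∀ i, Module.finrank k (LinearMap.range (p i)) = 1)
    (hadj : ∀ i j, G.Adj i j → ∃ r : k, r ≠ 0 ∧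
      p i * p j * p i = r • p i ∧ p j * p i * p j = r • p j)
    (hmin : (⨆ i, LinearMap.range (p i)) = ⊤ ∨ (⨅ i, LinearMap.ker (p i)) = ⊥)
    (g : V ≃ₗ[k] V)
    (hg : ∀ i, (g : Module.End k V) * p i = p i * (g : Module.End k V)) :
    ∃ c : k, c ≠ 0 ∧ (g : Module.End k V) = c • (1 : Module.End k V) := by
  choose c hc using fun i => exists_range_le_eigenspace_of_commute (hg i) (hrank i)
  have hc_adj : ∀ i j, G.Adj i j → c i = c j := fun i j hij => by
    obtain ⟨r, hr, hpij, -⟩ := hadj i j hij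
    exact eq_of_range_le_eigenspace (hc i) (hc j) (hg j)
      (mul_ne_zero_of_mul_mul_eq_smul hr (ne_zero_of_finrank_range_eq_one (hrank i)) hpij)
  obtain ⟨i₀⟩ := hconn.nonempty
  have hc₀ : ∀ i, range (p i) ≤ eigenspace g (c i₀) := fun i =>
    (hconn.preconnected i i₀).eq_of_forall_adj hc_adj ▸ hc i
  have hg_eq : (g : Module.End k V) = c i₀ • 1 :=
    hmin.elim (eq_smul_one_of_iSup_range_eq_top hc₀) (eq_smul_one_of_iInf_ker_eq_bot hc₀ hg)
  refine ⟨c i₀, fun hc_zero => ne_zero_of_finrank_range_eq_one (hrank i₀) ?_, hg_eq⟩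
  ext x
  have : g (p i₀ x) = 0 := by simp [← LinearEquiv.coe_coe, hg_eq, hc_zero]
  simpa using this

/-- Let `k` be a field, `V` a finite-dimensional `k`-vector space and `Γ` a
connected finite simply laced graph with vertex set `I`.  Suppose each vertex `i` carries a
rank-one projector `p i` on `V` such that projectors at adjacent vertices are `r`-unbiased for
some nonzero scalar `r` (`p i * p j * p i = r • p i` and `p j * p i * p j = r • p j`), and
projectors at distinct non-adjacent vertices are orthogonal (`p i * p j = p j * p i = 0`).
If either the images of the projectors span `V` or the intersection of their kernels is zero,
then any invertible endomorphism of `V` commuting with all the `p i` is a nonzero scalar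
multiple of the identity. -/
theorem configuration_automorphisms_are_scalars
    {k : Type*} [Field k] {V : Type*} [AddCommGroup V] [Module k V] [FiniteDimensional k V]
    {I : Type*} [Fintype I] (G : SimpleGraph I) (hconn : G.Connected)
    (p : I → Module.End k V)
    (hproj : ∀ i, p i * p i = p i)
    (hrank : ∀ i, Module.finrank k (LinearMap.range (p i)) = 1)
    (hadj : ∀ i j, G.Adj i j → ∃ r : k, r ≠ 0 ∧
      p i * p j * p i = r • p i ∧ p j * p i * p j = r • p j)
    (hnadj : ∀ i j, i ≠ j → ¬ G.Adj i j → p i * p j = 0 ∧ p j * p i = 0)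
    (hmin : (⨆ i, LinearMap.range (p i)) = ⊤ ∨ (⨅ i, LinearMap.ker (p i)) = ⊥)
    (g : V ≃ₗ[k] V)
    (hg : ∀ i, (g : Module.End k V) * p i = p i * (g : Module.End k V)) :
    ∃ c : k, c ≠ 0 ∧ (g : Module.End k V) = c • (1 : Module.End k V) :=
  configuration_automorphisms_are_scalars_general G hconn p hrank hadj hmin g hg
end

section
/- Let k be a field, n a positive natural number with (n : k) ≠ 0, and A = (a_{ij}) an n × n matrix over k all of whose entries are nonzero. Define the matrix h(A) by h(A)_{ij} = 1/(n · a_{ji}). Then A is a generalized Hadamard matrix (i.e. for all i ≠ s, the sum over j of a_{ij}/a_{sj} equals 0) if and only if A is invertible and h(A) = A⁻¹. -/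
/-- Let `k` be a field, `n > 0` with `(n : k) ≠ 0`, and `A` an `n × n` matrix
over `k` with all entries nonzero.  Let `h(A)` be the matrix with entries
`h(A) i j = 1 / (n * A j i)` (the Hadamard involution).  Then `A` is a generalized Hadamard
matrix (`∑ j, A i j / A s j = 0` for all `i ≠ s`) if and only if `A` is invertible and
`h(A) = A⁻¹`. -/
theorem generalized_hadamard_iff {k : Type*} [Field k] {n : ℕ} (hn : 0 < n)
    (hnk : (n : k) ≠ 0) (A : Matrix (Fin n) (Fin n) k) (hA : ∀ i j, A i j ≠ 0) :
    (∀ i s, i ≠ s → ∑ j, A i j / A s j = 0) ↔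
      (IsUnit A ∧ Matrix.of (fun i j => ((n : k) * A j i)⁻¹) = A⁻¹) := by
  set H : Matrix (Fin n) (Fin n) k := Matrix.of (fun i j => ((n : k) * A j i)⁻¹) with hH
  have hentry : ∀ i s, (A * H) i s = (n : k)⁻¹ * ∑ j, A i j / A s j := by
    intro i s
    rw [Matrix.mul_apply, Finset.mul_sum]
    refine Finset.sum_congr rfl fun j _ => ?_
    simp only [hH, Matrix.of_apply, mul_inv]
    field_simp
  constructor
  · intro h
    have hmul : A * H = 1 := by
      ext i s
      rw [hentry]
      by_cases hi : i = s
      · subst hi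
        simp only [Matrix.one_apply_eq]
        rw [show ∑ j, A i j / A i j = (n : k) by
          rw [Finset.sum_congr rfl fun j _ => div_self (hA i j)]; simp]
        exact inv_mul_cancel₀ hnk
      · rw [h i s hi]
        simp [Matrix.one_apply_ne hi]
    have hinv : A⁻¹ = H := Matrix.inv_eq_right_inv hmul
    refine ⟨?_, hinv.symm⟩
    rw [Matrix.isUnit_iff_isUnit_det]
    exact Matrix.isUnit_det_of_right_inverse hmul
  · rintro ⟨hU, hinv⟩
    intro i s his
    have hmul : A * H = 1 := by
      rw [hinv, Matrix.mul_nonsing_inv]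
      exact (Matrix.isUnit_iff_isUnit_det A).mp hU
    have := congrFun (congrFun hmul i) s
    rw [hentry, Matrix.one_apply_ne his] at this
    exact (mul_eq_zero.mp this).resolve_left (inv_ne_zero hnk)
end

section
/- Let K be a commutative ring, A a commutative unital K-algebra, and Δ ∈ A. Then Δ is well-tempered if and only if Δ is invertible in A. -/
open scoped TensorProduct

noncomputable section

universe u v

/-! ### The homotope of an algebra at an element -/

variable (K : Type v) [CommRing K] (A : Type u) [Ring A] [Algebra K A]

/-- The (non-unital) homotope of a ring `A` at an element `Δ`: the same underlying
additive group, with multiplication `a ∘ b = a * Δ * b`. -/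
@[ext]
structure Homotope {A : Type u} [Ring A] (Δ : A) : Type u where
  /-- the underlying element of `A` -/
  val : A

namespace Homotope

variable {A} (Δ : A)

theorem val_injective : Function.Injective (Homotope.val (Δ := Δ)) := fun a b h => by
  cases a; cases b; cases h; rfl

instance : Zero (Homotope Δ) := ⟨⟨0⟩⟩
instance : Add (Homotope Δ) := ⟨fun x y => ⟨x.val + y.val⟩⟩
instance : Neg (Homotope Δ) := ⟨fun x => ⟨-x.val⟩⟩
instance : Sub (Homotope Δ) := ⟨fun x y => ⟨x.val - y.val⟩⟩
instance : SMul ℕ (Homotope Δ) := ⟨fun n x => ⟨n • x.val⟩⟩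
instance : SMul ℤ (Homotope Δ) := ⟨fun n x => ⟨n • x.val⟩⟩
instance : Mul (Homotope Δ) := ⟨fun x y => ⟨x.val * Δ * y.val⟩⟩
instance : SMul K (Homotope Δ) := ⟨fun k x => ⟨k • x.val⟩⟩

@[simp] theorem zero_val : (0 : Homotope Δ).val = 0 := rfl
@[simp] theorem add_val (x y : Homotope Δ) : (x + y).val = x.val + y.val := rfl
@[simp] theorem neg_val (x : Homotope Δ) : (-x).val = -x.val := rfl
@[simp] theorem sub_val (x y : Homotope Δ) : (x - y).val = x.val - y.val := rfl
@[simp] theorem mul_val (x y : Homotope Δ) : (x * y).val = x.val * Δ * y.val := rfl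
@[simp] theorem smul_val (k : K) (x : Homotope Δ) : (k • x).val = k • x.val := rfl

instance : AddCommGroup (Homotope Δ) :=
  (val_injective Δ).addCommGroup Homotope.val rfl (fun _ _ => rfl) (fun _ => rfl)
    (fun _ _ => rfl) (fun _ _ => rfl) (fun _ _ => rfl)

instance : NonUnitalRing (Homotope Δ) :=
  { (inferInstance : AddCommGroup (Homotope Δ)),
    (inferInstance : Mul (Homotope Δ)) with
    left_distrib := fun x y z => by ext; simp [mul_add]
    right_distrib := fun x y z => by ext; simp [add_mul]
    zero_mul := fun x => by ext; simp
    mul_zero := fun x => by ext; simp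
    mul_assoc := fun x y z => by ext; simp [mul_assoc] }

/-- the projection to `A` as an additive map -/
def valAddHom : Homotope Δ →+ A :=
  { toFun := Homotope.val, map_zero' := rfl, map_add' := fun _ _ => rfl }

instance : Module K (Homotope Δ) :=
  (val_injective Δ).module K (valAddHom Δ) (fun _ _ => rfl)

instance : IsScalarTower K (Homotope Δ) (Homotope Δ) :=
  ⟨fun k x y => by ext; simp [smul_mul_assoc]⟩

instance : SMulCommClass K (Homotope Δ) (Homotope Δ) :=
  ⟨fun k x y => by ext; simp [mul_smul_comm]⟩

end Homotope

/-- The unital homotope of `A` at `Δ`, obtained from the non-unital homotope by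
adjoining a unit: `B = K·1 ⊕ A_Δ`. -/
abbrev UnitalHomotope (Δ : A) : Type _ := Unitization K (Homotope Δ)

namespace UnitalHomotope

variable (Δ : A)

/-- The non-unital algebra map `A_Δ → A`, `a ↦ a·Δ`. -/
def phi1 : Homotope Δ →ₙₐ[K] A :=
  { toFun := fun x => x.val * Δ
    map_smul' := fun k x => smul_mul_assoc k x.val Δ
    map_zero' := zero_mul Δ
    map_add' := fun x y => add_mul x.val y.val Δ
    map_mul' := fun x y => mul_assoc (x.val * Δ) y.val Δ }

/-- The non-unital algebra map `A_Δ → A`, `a ↦ Δ·a`. -/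
def phi2 : Homotope Δ →ₙₐ[K] A :=
  { toFun := fun x => Δ * x.val
    map_smul' := fun k x => mul_smul_comm k Δ x.val
    map_zero' := mul_zero Δ
    map_add' := fun x y => mul_add Δ x.val y.val
    map_mul' := fun x y => by
      show Δ * (x.val * Δ * y.val) = Δ * x.val * (Δ * y.val)
      simp [mul_assoc] }

/-- The algebra homomorphism `ψ₁ : B → A`, determined by `a ↦ a·Δ` on `B⁺ = A`. -/
def psi1 : UnitalHomotope K A Δ →ₐ[K] A := Unitization.lift (phi1 K A Δ)

/-- The algebra homomorphism `ψ₂ : B → A`, determined by `a ↦ Δ·a` on `B⁺ = A`. -/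
def psi2 : UnitalHomotope K A Δ →ₐ[K] A := Unitization.lift (phi2 K A Δ)

/-- The augmentation `B → K` of the unital homotope. -/
def aug : UnitalHomotope K A Δ →ₐ[K] K := Unitization.fstHom K (Homotope Δ)

/-- The augmentation ideal `B⁺ ⊆ B`, as a left ideal (hence a left `B`-module). -/
def plusLeft : Ideal (UnitalHomotope K A Δ) := RingHom.ker (aug K A Δ).toRingHom

/-- The augmentation, as a ring homomorphism on the opposite algebra. -/
def augOp : (UnitalHomotope K A Δ)ᵐᵒᵖ →+* K :=
  RingHom.fromOpposite (aug K A Δ).toRingHom (fun x y => Commute.all _ _)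

/-- The augmentation ideal `B⁺`, as a left ideal of `Bᵐᵒᵖ`, i.e. as a right `B`-module. -/
def plusRight : Ideal (UnitalHomotope K A Δ)ᵐᵒᵖ := RingHom.ker (augOp K A Δ)

end UnitalHomotope

open UnitalHomotope

/-- An element `Δ` of a `K`-algebra `A` is *well-tempered* if the two-sided ideal
generated by `Δ` is all of `A`, and the augmentation ideal `B⁺` of the unital homotope
`B = Â_Δ` is projective both as a left and as a right `B`-module. -/
def WellTempered (Δ : A) : Prop :=
  TwoSidedIdeal.span ({Δ} : Set A) = ⊤ ∧
    Module.Projective (UnitalHomotope K A Δ) (plusLeft K A Δ) ∧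
    Module.Projective (UnitalHomotope K A Δ)ᵐᵒᵖ (plusRight K A Δ)

namespace UnitalHomotope

variable {A} (Δ : A)

/-- `A` as a left module over the unital homotope `B = Â_Δ`, via `ψ₁`. -/
instance instModulePsi1 : Module (UnitalHomotope K A Δ) A :=
  Module.compHom A (psi1 K A Δ).toRingHom

theorem smul_def (b : UnitalHomotope K A Δ) (a : A) : b • a = psi1 K A Δ b * a := rfl

instance : SMulCommClass (UnitalHomotope K A Δ) K A :=
  ⟨fun b k a => mul_smul_comm k (psi1 K A Δ b) a⟩

instance : SMulCommClass K (UnitalHomotope K A Δ) A :=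
  ⟨fun k b a => (mul_smul_comm k (psi1 K A Δ b) a).symm⟩

instance : IsScalarTower K (UnitalHomotope K A Δ) A :=
  ⟨fun k b a => by
    rw [smul_def, smul_def, map_smul, smul_mul_assoc]⟩

end UnitalHomotope

end


section Aux

variable {K : Type v} [CommRing K] {A : Type u} [CommRing A] [Algebra K A]

theorem mem_plusLeft_iff (Δ : A) (x : UnitalHomotope K A Δ) :
    x ∈ UnitalHomotope.plusLeft K A Δ ↔ x.fst = 0 := Iff.rfl

theorem mem_plusRight_iff (Δ : A) (x : (UnitalHomotope K A Δ)ᵐᵒᵖ) :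
    x ∈ UnitalHomotope.plusRight K A Δ ↔ x.unop.fst = 0 := Iff.rfl

theorem mul_e_of_fst_eq_zero {Δ d : A} (hd : Δ * d = 1)
    (x : UnitalHomotope K A Δ) (hx : x.fst = 0) :
    x * Unitization.inr ⟨d⟩ = x := by
  refine Unitization.ext ?_ ?_
  · simp [hx]
  · ext
    simp only [Unitization.snd_mul, Unitization.fst_inr, Unitization.snd_inr, hx,
      zero_smul, smul_zero, zero_add, add_zero]
    show x.snd.val * Δ * d = x.snd.val
    rw [mul_assoc, hd, mul_one]

theorem e_mul_of_fst_eq_zero {Δ d : A} (hd : Δ * d = 1)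
    (x : UnitalHomotope K A Δ) (hx : x.fst = 0) :
    Unitization.inr (⟨d⟩ : Homotope Δ) * x = x := by
  refine Unitization.ext ?_ ?_
  · simp [hx]
  · ext
    simp only [Unitization.snd_mul, Unitization.fst_inr, Unitization.snd_inr, hx,
      zero_smul, smul_zero, zero_add, add_zero]
    show d * Δ * x.snd.val = x.snd.val
    rw [mul_comm d Δ, hd, one_mul]

end Aux

/-- For a commutative unital `K`-algebra `A`, an element `Δ ∈ A` is
well-tempered if and only if it is invertible. -/
theorem wellTempered_iff_isUnit_of_commutative {K : Type v} [CommRing K] {A : Type u}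
    [CommRing A] [Algebra K A] (Δ : A) :
    WellTempered K A Δ ↔ IsUnit Δ := by
  constructor
  · rintro ⟨hspan, -, -⟩
    have h1 : (1 : A) ∈ TwoSidedIdeal.span ({Δ} : Set A) := by
      rw [hspan]; exact TwoSidedIdeal.mem_top _
    rw [TwoSidedIdeal.mem_span_iff] at h1
    have := h1 (TwoSidedIdeal.mk' (Ideal.span {Δ} : Ideal A) (Ideal.zero_mem _)
      (fun hx hy => Ideal.add_mem _ hx hy) (fun hx => neg_mem hx)
      (fun hy => Ideal.mul_mem_left _ _ hy) (fun hx => Ideal.mul_mem_right _ _ hx))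
      (by
        intro x hx
        rcases hx with rfl
        exact (TwoSidedIdeal.mem_mk' _ _ _ _ _ _ _).2 (Ideal.subset_span rfl))
    rw [TwoSidedIdeal.mem_mk'] at this
    rwa [← Ideal.span_singleton_eq_top, Ideal.eq_top_iff_one]
  · intro hu
    obtain ⟨u, hu⟩ := hu
    set d : A := ↑u⁻¹ with hdd
    have hd : Δ * d = 1 := by rw [← hu, hdd]; exact u.mul_inv
    set e : UnitalHomotope K A Δ := Unitization.inr ⟨d⟩ with he
    have hefst : e.fst = 0 := rfl
    refine ⟨?_, ?_, ?_⟩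
    · -- span is top
      rw [eq_top_iff]
      intro x _
      have : x = (x * d) * Δ := by rw [mul_assoc, mul_comm d Δ, hd, mul_one]
      rw [this]
      exact TwoSidedIdeal.mul_mem_left _ _ _ (TwoSidedIdeal.subset_span rfl)
    · -- left projective
      refine Module.Projective.of_split (R := UnitalHomotope K A Δ)
        (M := UnitalHomotope K A Δ) (Submodule.subtype _)
        { toFun := fun b => ⟨b * e, by
            rw [mem_plusLeft_iff]
            simp [hefst]⟩
          map_add' := fun x y => Subtype.ext (add_mul x y e)
          map_smul' := fun r x => Subtype.ext (by
            show r • x * e = r • (x * e)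
            rw [smul_eq_mul, smul_eq_mul, mul_assoc]) } ?_
      refine LinearMap.ext fun z => ?_
      obtain ⟨x, hx⟩ := z
      exact Subtype.ext (mul_e_of_fst_eq_zero hd x hx)
    · -- right projective
      refine Module.Projective.of_split (R := (UnitalHomotope K A Δ)ᵐᵒᵖ)
        (M := (UnitalHomotope K A Δ)ᵐᵒᵖ) (Submodule.subtype _)
        { toFun := fun b => ⟨b * MulOpposite.op e, by
            rw [mem_plusRight_iff]
            show (e * b.unop).fst = 0
            simp [hefst]⟩
          map_add' := fun x y => Subtype.ext (add_mul x y (MulOpposite.op e))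
          map_smul' := fun r x => Subtype.ext (by
            show r • x * MulOpposite.op e = r • (x * MulOpposite.op e)
            rw [smul_eq_mul, smul_eq_mul, mul_assoc]) } ?_
      refine LinearMap.ext fun z => ?_
      obtain ⟨x, hx⟩ := z
      refine Subtype.ext ?_
      show x * MulOpposite.op e = x
      rw [← MulOpposite.op_unop x, ← MulOpposite.op_mul]
      exact congrArg _ (e_mul_of_fst_eq_zero hd x.unop hx)
end

section
/- Let K be a commutative ring, A a unital K-algebra, and Δ ∈ A a well-tempered element; let B = Â_Δ be the unital homotope with augmentation ideal B⁺. Then the map B⁺ ⊗_B B⁺ → B⁺ induced by the multiplication of B⁺ is an isomorphism (of A-bimodules, in particular a bijection). -/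
open scoped TensorProduct

variable {K : Type v} [CommRing K] {A : Type u} [Ring A] [Algebra K A]

/-- The multiplication of the non-unital homotope `B⁺ = A_Δ`, as a `K`-bilinear map. -/
noncomputable def homotopeMulBilin (Δ : A) :
    Homotope Δ →ₗ[K] Homotope Δ →ₗ[K] Homotope Δ where
  toFun x :=
    { toFun := fun y => x * y
      map_add' := fun y z => mul_add x y z
      map_smul' := fun k y => mul_smul_comm k x y }
  map_add' x y := LinearMap.ext fun z => add_mul x y z
  map_smul' k x := LinearMap.ext fun z => smul_mul_assoc k x z

/-- The multiplication map `B⁺ ⊗_K B⁺ → B⁺` of the homotope. -/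
noncomputable def homotopeMulMap (Δ : A) :
    Homotope Δ ⊗[K] Homotope Δ →ₗ[K] Homotope Δ :=
  TensorProduct.lift (homotopeMulBilin Δ)

section Aux

variable (Δ : A)

@[simp] theorem homotopeMulMap_tmul (x y : Homotope Δ) :
    homotopeMulMap (K := K) Δ (x ⊗ₜ[K] y) = x * y := rfl

/-- From `TwoSidedIdeal.span {Δ} = ⊤` we extract a finite representation of `1`. -/
theorem exists_one_rep (h : TwoSidedIdeal.span ({Δ} : Set A) = ⊤) :
    ∃ (n : ℕ) (u v : Fin n → A), ∑ i, u i * Δ * v i = 1 := by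
  have h1 : (1 : A) ∈ TwoSidedIdeal.span ({Δ} : Set A) := by
    rw [h]; trivial
  rw [TwoSidedIdeal.mem_span_iff_mem_addSubgroup_closure] at h1
  refine AddSubgroup.closure_induction ?_ ?_ ?_ ?_ h1
  · rintro z ⟨y, ⟨a, -, d, hd, rfl⟩, b, -, rfl⟩
    rw [Set.mem_singleton_iff] at hd
    subst hd
    exact ⟨1, ![a], ![b], by simp⟩
  · exact ⟨0, ![], ![], by simp⟩
  · rintro z w - - ⟨n, u, v, hz⟩ ⟨m, u', v', hw⟩
    refine ⟨n + m, Fin.append u u', Fin.append v v', ?_⟩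
    rw [Fin.sum_univ_add]
    simp only [Fin.append_left, Fin.append_right, hz, hw]
  · rintro z - ⟨n, u, v, hz⟩
    exact ⟨n, fun i => -(u i), v, by simp [hz]⟩

end Aux

/-- If `Δ` is well-tempered, the map `B⁺ ⊗_B B⁺ → B⁺` induced by the
multiplication of `B⁺` is an isomorphism.  Since `B = K·1 ⊕ B⁺`, the tensor product over `B` is
the quotient of `B⁺ ⊗_K B⁺` by the span of the elements `(x·b) ⊗ y - x ⊗ (b·y)` with
`x, y, b ∈ B⁺`; so the claim is that the multiplication map `B⁺ ⊗_K B⁺ → B⁺` is surjective and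
its kernel is exactly the span of these relations. -/

theorem homotope_mul_tensor_iso (Δ : A) (h : WellTempered K A Δ) :
    Function.Surjective (homotopeMulMap (K := K) Δ) ∧
      LinearMap.ker (homotopeMulMap (K := K) Δ) =
        Submodule.span K {z : Homotope Δ ⊗[K] Homotope Δ |
          ∃ x y b : Homotope Δ, z = (x * b) ⊗ₜ[K] y - x ⊗ₜ[K] (b * y)} := by
  classical
  obtain ⟨n, u, v, huv⟩ := exists_one_rep Δ h.1
  set m := homotopeMulMap (K := K) Δ with hm
  set N : Submodule K (Homotope Δ ⊗[K] Homotope Δ) :=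
    Submodule.span K {z : Homotope Δ ⊗[K] Homotope Δ |
      ∃ x y b : Homotope Δ, z = (x * b) ⊗ₜ[K] y - x ⊗ₜ[K] (b * y)} with hN
  -- key computation: ∑ i, ⟨u i⟩ * ⟨v i * a⟩ = ⟨a⟩ in the homotope
  have key : ∀ a : A,
      (∑ i, (⟨u i⟩ : Homotope Δ) * (⟨v i * a⟩ : Homotope Δ)) = (⟨a⟩ : Homotope Δ) := by
    intro a
    apply Homotope.val_injective
    have hval : (Homotope.valAddHom Δ) (∑ i, (⟨u i⟩ : Homotope Δ) * (⟨v i * a⟩ : Homotope Δ))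
        = ∑ i, u i * Δ * (v i * a) := by
      rw [map_sum]; rfl
    show (Homotope.valAddHom Δ) (∑ i, (⟨u i⟩ : Homotope Δ) * (⟨v i * a⟩ : Homotope Δ)) = a
    rw [hval]
    calc ∑ i, u i * Δ * (v i * a) = ∑ i, (u i * Δ * v i) * a := by
          simp [mul_assoc]
      _ = (∑ i, u i * Δ * v i) * a := by rw [Finset.sum_mul]
      _ = a := by rw [huv, one_mul]
  have hsurj : Function.Surjective m := by
    intro a
    refine ⟨∑ i, (⟨u i⟩ : Homotope Δ) ⊗ₜ[K] (⟨v i * a.val⟩ : Homotope Δ), ?_⟩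
    rw [map_sum]
    simp only [hm, homotopeMulMap_tmul]
    rw [key a.val]
  refine ⟨hsurj, le_antisymm ?_ ?_⟩
  · -- ker ≤ N
    -- the section s : H → T/N
    set q := N.mkQ with hq
    have hsec : ∀ t : Homotope Δ ⊗[K] Homotope Δ,
        q t = ∑ i, q ((⟨u i⟩ : Homotope Δ) ⊗ₜ[K] (⟨v i * (m t).val⟩ : Homotope Δ)) := by
      have slin : ∃ s : Homotope Δ →ₗ[K] (Homotope Δ ⊗[K] Homotope Δ) ⧸ N,
          ∀ a : Homotope Δ,
            s a = ∑ i, q ((⟨u i⟩ : Homotope Δ) ⊗ₜ[K] (⟨v i * a.val⟩ : Homotope Δ)) := by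
        refine ⟨{ toFun := fun a => ∑ i, q ((⟨u i⟩ : Homotope Δ) ⊗ₜ[K] (⟨v i * a.val⟩ : Homotope Δ))
                  map_add' := ?_
                  map_smul' := ?_ }, fun a => rfl⟩
        · intro a b
          show (∑ i, q ((⟨u i⟩ : Homotope Δ) ⊗ₜ[K] (⟨v i * (a + b).val⟩ : Homotope Δ)))
            = (∑ i, q ((⟨u i⟩ : Homotope Δ) ⊗ₜ[K] (⟨v i * a.val⟩ : Homotope Δ)))
              + ∑ i, q ((⟨u i⟩ : Homotope Δ) ⊗ₜ[K] (⟨v i * b.val⟩ : Homotope Δ))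
          rw [← Finset.sum_add_distrib]
          refine Finset.sum_congr rfl fun i _ => ?_
          have : (⟨v i * (a + b).val⟩ : Homotope Δ) = ⟨v i * a.val⟩ + ⟨v i * b.val⟩ := by
            apply Homotope.val_injective; simp [mul_add]
          rw [this, TensorProduct.tmul_add, map_add]
        · intro k a
          show (∑ i, q ((⟨u i⟩ : Homotope Δ) ⊗ₜ[K] (⟨v i * (k • a).val⟩ : Homotope Δ)))
            = k • ∑ i, q ((⟨u i⟩ : Homotope Δ) ⊗ₜ[K] (⟨v i * a.val⟩ : Homotope Δ))
          rw [Finset.smul_sum]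
          refine Finset.sum_congr rfl fun i _ => ?_
          have : (⟨v i * (k • a).val⟩ : Homotope Δ) = k • (⟨v i * a.val⟩ : Homotope Δ) := by
            apply Homotope.val_injective; simp [mul_smul_comm]
          rw [this, TensorProduct.tmul_smul, map_smul]
      obtain ⟨s, hs⟩ := slin
      have hqsm : q = s ∘ₗ m := by
        refine TensorProduct.ext' fun x y => ?_
        show q (x ⊗ₜ[K] y) = s (m (x ⊗ₜ[K] y))
        rw [hm, homotopeMulMap_tmul]
        have step : ∀ i : Fin n,
            q ((⟨u i⟩ : Homotope Δ) ⊗ₜ[K] (⟨v i * (x * y).val⟩ : Homotope Δ)) =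
              q (((⟨u i⟩ : Homotope Δ) * (⟨v i * x.val⟩ : Homotope Δ)) ⊗ₜ[K] y) := by
          intro i
          have hb : (⟨v i * (x * y).val⟩ : Homotope Δ) = (⟨v i * x.val⟩ : Homotope Δ) * y := by
            apply Homotope.val_injective; show v i * (x.val * Δ * y.val) = v i * x.val * Δ * y.val
            simp [mul_assoc]
          rw [hb, eq_comm, ← sub_eq_zero, ← map_sub]
          rw [hq, Submodule.mkQ_apply, Submodule.Quotient.mk_eq_zero]
          exact Submodule.subset_span ⟨⟨u i⟩, y, ⟨v i * x.val⟩, rfl⟩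
        calc q (x ⊗ₜ[K] y)
            = q ((∑ i, (⟨u i⟩ : Homotope Δ) * (⟨v i * x.val⟩ : Homotope Δ)) ⊗ₜ[K] y) := by
              rw [key x.val]
          _ = ∑ i, q (((⟨u i⟩ : Homotope Δ) * (⟨v i * x.val⟩ : Homotope Δ)) ⊗ₜ[K] y) := by
              rw [TensorProduct.sum_tmul, map_sum]
          _ = ∑ i, q ((⟨u i⟩ : Homotope Δ) ⊗ₜ[K] (⟨v i * (x * y).val⟩ : Homotope Δ)) := by
              exact (Finset.sum_congr rfl fun i _ => (step i).symm)
          _ = s (x * y) := (hs _).symm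
      intro t
      conv_lhs => rw [hqsm]
      exact hs (m t)
    intro t ht
    rw [LinearMap.mem_ker] at ht
    have := hsec t
    rw [ht] at this
    simp only [Homotope.zero_val, mul_zero] at this
    have hz : ∀ i : Fin n,
        q ((⟨u i⟩ : Homotope Δ) ⊗ₜ[K] (⟨0⟩ : Homotope Δ)) = 0 := by
      intro i
      have : (⟨(0 : A)⟩ : Homotope Δ) = 0 := rfl
      rw [this, TensorProduct.tmul_zero, map_zero]
    rw [Finset.sum_congr rfl (fun i _ => hz i), Finset.sum_const_zero] at this
    rwa [hq, Submodule.mkQ_apply, Submodule.Quotient.mk_eq_zero] at this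
  · -- N ≤ ker
    rw [hN, Submodule.span_le]
    rintro z ⟨x, y, b, rfl⟩
    simp only [SetLike.mem_coe, LinearMap.mem_ker, map_sub, hm, homotopeMulMap_tmul]
    rw [mul_assoc, sub_self]
end

section
/- Let K be a commutative ring, A a unital K-algebra, Δ ∈ A a well-tempered element, and B = Â_Δ the unital homotope. Regard A as a left B-module via ψ₁ (b acts by left multiplication by ψ₁(b) in A). Then the map A^op → End_B(A), sending a ∈ A to the operator of right multiplication by a on A, is an isomorphism of K-algebras (and of A-bimodules). -/
open scoped TensorProduct

/-!
An endomorphism `f` of the `B`-module `A` commutes with left multiplication by every `u * Δ`,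
the image under `ψ₁` of `u ∈ B⁺`. The elements `y` with `f (u * y * z) = u * f (y * z)` for all
`u, z` form a two-sided ideal containing `Δ`, hence containing `1`; so `f` is left `A`-linear,
i.e. right multiplication by `f 1`.
-/

namespace AddMonoidHom

variable {A : Type*} [Ring A]

theorem map_mul_eq_mul_map_of_span_eq_top (f : A →+ A) {s : Set A}
    (hs : TwoSidedIdeal.span s = ⊤) (hf : ∀ d ∈ s, ∀ u z, f (u * d * z) = u * d * f z)
    (x y : A) : f (x * y) = x * f y := by
  have key (w : A) (hw : w ∈ TwoSidedIdeal.span s) (u z : A) : f (u * w * z) = u * f (w * z) := by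
    induction hw using TwoSidedIdeal.span_induction generalizing u z with
    | mem d hd =>
      have hd₁ : f (d * z) = d * f z := by simpa using hf d hd 1 z
      rw [hf d hd, hd₁, mul_assoc]
    | zero => simp
    | add a b _ _ ha hb => simp only [mul_add, add_mul, map_add, ha, hb]
    | neg a _ ha => simp only [mul_neg, neg_mul, map_neg, ha]
    | left_absorb r a _ ha => rw [← mul_assoc u, ha, ha, mul_assoc]
    | right_absorb r a _ ha => rw [← mul_assoc u, mul_assoc (u * a), ha, mul_assoc a]
  simpa using key 1 (hs ▸ TwoSidedIdeal.mem_top _) x y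

end AddMonoidHom

namespace UnitalHomotope

variable {K : Type v} [CommRing K] {A : Type u} [Ring A] [Algebra K A] (Δ : A)

theorem inr_smul (x z : A) : (Unitization.inr ⟨x⟩ : UnitalHomotope K A Δ) • z = x * Δ * z := by
  simp [smul_def, psi1, phi1]

theorem end_map_mul_mul (f : Module.End (UnitalHomotope K A Δ) A) (u z : A) :
    f (u * Δ * z) = u * Δ * f z := by
  rw [← inr_smul (K := K), map_smul, inr_smul]

theorem end_apply_eq_mul_apply_one (hΔ : TwoSidedIdeal.span {Δ} = ⊤)
    (f : Module.End (UnitalHomotope K A Δ) A) (x : A) : f x = x * f 1 := by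
  simpa using f.toAddMonoidHom.map_mul_eq_mul_map_of_span_eq_top hΔ
    (fun d hd => Set.mem_singleton_iff.mp hd ▸ end_map_mul_mul Δ f) x 1

instance : SMulCommClass Aᵐᵒᵖ (UnitalHomotope K A Δ) A :=
  ⟨fun a b x => mul_assoc (psi1 K A Δ b) x a.unop⟩

end UnitalHomotope

open UnitalHomotope in
/-- If `Δ` is well-tempered and `A` is regarded as a left `B`-module via
`ψ₁`, then `a ↦ (right multiplication by a)` is an isomorphism of `K`-algebras
`A^op ≅ End_B(A)`. -/
theorem opAlgebra_iso_end {K : Type v} [CommRing K] {A : Type u} [Ring A] [Algebra K A]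
    (Δ : A) (h : WellTempered K A Δ) :
    ∃ e : Aᵐᵒᵖ ≃ₐ[K] Module.End (UnitalHomotope K A Δ) A,
      ∀ (a : Aᵐᵒᵖ) (x : A), e a x = x * a.unop := by
  let ρ : Aᵐᵒᵖ →ₐ[K] Module.End (UnitalHomotope K A Δ) A := Algebra.lsmul K _ A
  have hρ : Function.Bijective ρ := by
    refine ⟨fun a b hab => ?_, fun f => ⟨.op (f 1), ?_⟩⟩
    · simpa [ρ] using LinearMap.congr_fun hab 1
    · exact LinearMap.ext fun x => (end_apply_eq_mul_apply_one Δ h.1 f x).symm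
  exact ⟨AlgEquiv.ofBijective ρ hρ, fun a x => rfl⟩
end

section
/- Let K be a commutative ring, A a unital K-algebra, Δ ∈ A a well-tempered element, and B = Â_Δ the unital homotope. Regard A as a left B-module via ψ₁. Then the map A → Hom_B(A, B), sending a ∈ A to the composite of right multiplication by a, R_a : A → A = B⁺, with the inclusion B⁺ ↪ B, is an isomorphism of left A-modules, where the left A-module structure on Hom_B(A, B) is given by (x·φ)(a') = φ(a'·x). -/
open scoped TensorProduct

/-! In `B = Â_Δ` one has `b · x = ψ₁(b) x` and `x · b = x ψ₂(b)` for `x ∈ B⁺ = A`. The first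
identity makes right multiplication by `a` a `B`-linear map `A → B⁺`. Conversely, for a `B`-linear
`φ : A → B` the second gives `φ (y Δ v) = φ (y • v) = y ψ₂(φ v)`, so the left ideal of those `z`
for which `y ↦ φ (y z)` is right multiplication by some element contains `ΔA`; as `AΔA = A`, it
contains `1`. -/

theorem Ideal.eq_top_of_forall_mul_mem {R : Type*} [Ring R] {Δ : R}
    (hΔ : TwoSidedIdeal.span {Δ} = ⊤) {I : Ideal R} (hI : ∀ r, Δ * r ∈ I) : I = ⊤ := by
  have key : ∀ x ∈ TwoSidedIdeal.span {Δ}, ∀ r, x * r ∈ I := by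
    intro x hx
    induction hx using TwoSidedIdeal.span_induction with
    | mem x hx => rw [Set.mem_singleton_iff.1 hx]; exact hI
    | zero => simp
    | add x y _ _ hx hy => intro r; rw [add_mul]; exact add_mem (hx r) (hy r)
    | neg x _ hx => intro r; rw [neg_mul]; exact neg_mem (hx r)
    | left_absorb a x _ hx => intro r; rw [mul_assoc]; exact I.mul_mem_left a (hx r)
    | right_absorb b x _ hx => intro r; rw [mul_assoc]; exact hx (b * r)
  exact (Ideal.eq_top_iff_one I).2 (by simpa using key 1 (hΔ ▸ trivial) 1)

namespace UnitalHomotope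

variable (K : Type*) [CommRing K] {A : Type*} [Ring A] [Algebra K A] {Δ : A}

theorem mul_inr_mk (b : UnitalHomotope K A Δ) (x : A) :
    b * (⟨x⟩ : Homotope Δ) = ((⟨psi1 K A Δ b * x⟩ : Homotope Δ) : UnitalHomotope K A Δ) := by
  induction b using Unitization.ind with
  | _ r z =>
    rw [add_mul, Unitization.inl_mul_inr, ← Unitization.inr_mul, ← Unitization.inr_add]
    congr 1
    ext
    simp [psi1, phi1, add_mul, Algebra.smul_def]

theorem inr_mk_mul (x : A) (b : UnitalHomotope K A Δ) :
    ((⟨x⟩ : Homotope Δ) : UnitalHomotope K A Δ) * b = (⟨x * psi2 K A Δ b⟩ : Homotope Δ) := by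
  induction b using Unitization.ind with
  | _ r z =>
    rw [mul_add, Unitization.inr_mul_inl, ← Unitization.inr_mul, ← Unitization.inr_add]
    congr 1
    ext
    simp [psi2, phi2, mul_add, Algebra.smul_def, Algebra.commutes, mul_assoc]

theorem inr_mk_smul (x y : A) :
    ((⟨x⟩ : Homotope Δ) : UnitalHomotope K A Δ) • y = x * Δ * y := by
  simp [smul_def, psi1, phi1]

variable (Δ)

def rightMulHom : A →ₗ[K] A →ₗ[UnitalHomotope K A Δ] UnitalHomotope K A Δ :=
  LinearMap.mk₂' K _ (fun a y => ((⟨y * a⟩ : Homotope Δ) : UnitalHomotope K A Δ))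
    (fun a₁ a₂ y => by rw [mul_add, ← Unitization.inr_add]; rfl)
    (fun k a y => by rw [mul_smul_comm, ← Unitization.inr_smul]; rfl)
    (fun a y₁ y₂ => by rw [add_mul, ← Unitization.inr_add]; rfl)
    (fun b a y => by rw [smul_def, smul_eq_mul, mul_inr_mk, mul_assoc])

@[simp]
theorem rightMulHom_apply (a y : A) :
    rightMulHom K Δ a y = ((⟨y * a⟩ : Homotope Δ) : UnitalHomotope K A Δ) := rfl

theorem rightMulHom_injective : Function.Injective (rightMulHom K Δ) := fun a b h => by
  simpa using congrArg (fun f => (f 1).snd.val) h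

theorem rightMulHom_surjective (hΔ : TwoSidedIdeal.span {Δ} = ⊤) :
    Function.Surjective (rightMulHom K Δ) := by
  intro φ
  let I : Ideal A :=
    { carrier := {z | ∃ a, ∀ y, φ (y * z) = rightMulHom K Δ a y}
      add_mem' := fun ⟨a₁, h₁⟩ ⟨a₂, h₂⟩ =>
        ⟨a₁ + a₂, fun y => by rw [mul_add, map_add, h₁, h₂, map_add, LinearMap.add_apply]⟩
      zero_mem' := ⟨0, fun y => by simp⟩
      smul_mem' := fun c z ⟨a, ha⟩ => ⟨c * a, fun y => by simpa [mul_assoc] using ha (y * c)⟩ }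
  have hΔI : ∀ v, Δ * v ∈ I := fun v => ⟨psi2 K A Δ (φ v), fun y => by
    rw [← mul_assoc, ← inr_mk_smul K, map_smul, smul_eq_mul, inr_mk_mul, rightMulHom_apply]⟩
  obtain ⟨a, ha⟩ : (1 : A) ∈ I := by
    rw [Ideal.eq_top_of_forall_mul_mem hΔ hΔI]; trivial
  exact ⟨a, LinearMap.ext fun y => by simpa using (ha y).symm⟩

end UnitalHomotope

open UnitalHomotope in
/-- If `Δ` is well-tempered and `A` is regarded as a left `B`-module via
`ψ₁`, then the map `A → Hom_B(A, B)` sending `a` to (right multiplication by `a` : `A → B⁺ ⊆ B`)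
is an isomorphism of left `A`-modules, where `A` acts on `Hom_B(A, B)` by
`(x·φ)(a') = φ(a'·x)`. -/
theorem hom_to_b_iso {K : Type v} [CommRing K] {A : Type u} [Ring A] [Algebra K A]
    (Δ : A) (h : WellTempered K A Δ) :
    ∃ e : A ≃ₗ[K] (A →ₗ[UnitalHomotope K A Δ] UnitalHomotope K A Δ),
      (∀ a y : A, e a y = Unitization.inr (⟨y * a⟩ : Homotope Δ)) ∧
      (∀ x a y : A, e (x * a) y = e a (y * x)) := by
  obtain ⟨hΔ, -⟩ := h
  have hbij : Function.Bijective (rightMulHom K Δ) :=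
    ⟨rightMulHom_injective K Δ, rightMulHom_surjective K Δ hΔ⟩
  refine ⟨LinearEquiv.ofBijective (rightMulHom K Δ) hbij, fun a y => rfl, fun x a y => ?_⟩
  simp only [LinearEquiv.ofBijective_apply, rightMulHom_apply, mul_assoc]
end

section
/- Let K be a commutative ring, C a unital K-algebra, n a positive natural number, A = Mat_{n×n}(C) the matrix algebra, and Δ ∈ A with matrix entries Δ_{ij} ∈ C. Then the following are equivalent: (i) the two-sided ideal of A generated by Δ equals A; (ii) for every nonzero left C-module M, the induced map Δ_M : M^n → M^n, given by (Δ_M m)_i = Σ_j Δ_{ij} m_j, is not the zero map. -/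
/-!
Two-sided ideals of `Mat_n(C)` are exactly the `Mat_n(J)` for two-sided ideals `J` of `C`, and
the ideal generated by `Δ` is `Mat_n(J)` for the ideal `J` generated by the entries of `Δ`. So the
question is whether `J = C`. If so, no nonzero module is killed by all entries, since its
annihilator is a two-sided ideal containing them; if not, `C ⧸ J` is a nonzero module killed by
all entries. Finally `Δ_M = 0` exactly when every entry of `Δ` kills `M`.
-/

universe u

namespace TwoSidedIdeal

theorem span_eq_top_iff_forall_nontrivial_module {R : Type u} [Ring R] (s : Set R) :
    span s = ⊤ ↔ ∀ (M : Type u) [AddCommGroup M] [Module R M], Nontrivial M →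
      ∃ r ∈ s, ∃ x : M, r • x ≠ 0 := by
  constructor
  · intro hs M _ _ _
    by_contra! hann
    have hker : span s ≤ ker (Module.toAddMonoidEnd R M) :=
      span_le.mpr fun r hr => (mem_ker _).mpr <| AddMonoidHom.ext (hann r hr)
    have hone : (1 : R) ∈ ker (Module.toAddMonoidEnd R M) := hker (hs ▸ trivial)
    obtain ⟨x, hx⟩ := exists_ne (0 : M)
    exact hx (by simpa using DFunLike.congr_fun ((mem_ker _).mp hone) x)
  · intro h
    by_contra hne
    have : Nontrivial (R ⧸ (span s).asIdeal) := Submodule.Quotient.nontrivial_iff.mpr fun htop =>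
      hne <| (span s).eq_top <| mem_asIdeal.mp (htop ▸ Submodule.mem_top)
    obtain ⟨r, hr, x, hx⟩ := h (R ⧸ (span s).asIdeal) this
    obtain ⟨b, rfl⟩ := Submodule.Quotient.mk_surjective _ x
    rw [← Submodule.Quotient.mk_smul, ne_eq, Submodule.Quotient.mk_eq_zero] at hx
    exact hx <| mem_asIdeal.mpr <| mul_mem_right _ _ _ (subset_span hr)

theorem span_singleton_eq_matrix_span_entries {R n : Type*} [Ring R] [Fintype n] [DecidableEq n]
    (Δ : Matrix n n R) :
    span {Δ} = (span (Set.range fun p : n × n => Δ p.1 p.2)).matrix n := by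
  apply le_antisymm
  · exact span_le.mpr <| Set.singleton_subset_iff.mpr fun i j => subset_span ⟨(i, j), rfl⟩
  · cases isEmpty_or_nonempty n
    · exact fun N _ => Subsingleton.elim N 0 ▸ zero_mem _
    change orderIsoMatrix _ ≤ _
    rw [← OrderIso.le_symm_apply, span_le]
    rintro _ ⟨⟨i, j⟩, rfl⟩
    change _ ∈ (equivMatrix.symm (span {Δ}) : Set R)
    rw [coe_equivMatrix_symm_apply _ i j]
    exact ⟨Δ, subset_span rfl, rfl⟩

theorem matrix_eq_top_iff {R n : Type*} [Ring R] [Fintype n] [DecidableEq n] [Nonempty n]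
    (I : TwoSidedIdeal R) : I.matrix n = ⊤ ↔ I = ⊤ :=
  map_eq_top_iff orderIsoMatrix

end TwoSidedIdeal

theorem Matrix.exists_sum_smul_ne_zero_iff {R M m n : Type*} [Semiring R] [AddCommMonoid M]
    [Module R M] [Fintype n] (Δ : Matrix m n R) :
    (∃ (v : n → M) (i : m), ∑ j, Δ i j • v j ≠ 0) ↔ ∃ i j, ∃ x : M, Δ i j • x ≠ 0 := by
  classical
  constructor
  · rintro ⟨v, i, hv⟩
    obtain ⟨j, -, hj⟩ := Finset.exists_ne_zero_of_sum_ne_zero hv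
    exact ⟨i, j, v j, hj⟩
  · rintro ⟨i, j, x, hx⟩
    refine ⟨Pi.single j x, i, ?_⟩
    simpa [Pi.single_apply, smul_ite] using hx

theorem matrix_ideal_top_iff_acts_nontrivially_general {C : Type u} [Ring C]
    {n : ℕ} (hn : 0 < n) (Δ : Matrix (Fin n) (Fin n) C) :
    TwoSidedIdeal.span ({Δ} : Set (Matrix (Fin n) (Fin n) C)) = ⊤ ↔
      ∀ (M : Type u) [AddCommGroup M] [Module C M], Nontrivial M →
        ∃ (m : Fin n → M) (i : Fin n), ∑ j, Δ i j • m j ≠ 0 := by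
  have : NeZero n := ⟨hn.ne'⟩
  rw [TwoSidedIdeal.span_singleton_eq_matrix_span_entries, TwoSidedIdeal.matrix_eq_top_iff,
    TwoSidedIdeal.span_eq_top_iff_forall_nontrivial_module]
  simp only [Matrix.exists_sum_smul_ne_zero_iff, Set.exists_range_iff, Prod.exists]

/-- Let `C` be a unital `K`-algebra, `n > 0`, `A = Mat_{n×n}(C)` and
`Δ ∈ A`.  The two-sided ideal of `A` generated by `Δ` is all of `A` if and only if for every
nonzero left `C`-module `M` the induced map `Δ_M : M^n → M^n`, `(Δ_M m) i = ∑ j, Δ i j • m j`,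
is not the zero map. -/
theorem matrix_ideal_top_iff_acts_nontrivially {K : Type v} [CommRing K] {C : Type u} [Ring C]
    [Algebra K C] {n : ℕ} (hn : 0 < n) (Δ : Matrix (Fin n) (Fin n) C) :
    TwoSidedIdeal.span ({Δ} : Set (Matrix (Fin n) (Fin n) C)) = ⊤ ↔
      ∀ (M : Type u) [AddCommGroup M] [Module C M], Nontrivial M →
        ∃ (m : Fin n → M) (i : Fin n), ∑ j, Δ i j • m j ≠ 0 :=
  matrix_ideal_top_iff_acts_nontrivially_general hn Δ
end

section
/- Let k be a field, n a positive natural number, and A = Mat_{n×n}(k) the algebra of n × n matrices over k. Then every nonzero element Δ ∈ A is well-tempered: the two-sided ideal AΔA equals A, and the augmentation ideal B⁺ of the unital homotope B = Â_Δ is projective both as a left and as a right B-module. -/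
open scoped TensorProduct

/-! If `1 = ∑ wⱼ Δ uⱼ` in `A`, then `B⁺` is a direct summand of `Bᵐ` on either side. As a left
`B`-module, `B⁺` is `A` acted on through `ψ₁ : B → A`, and the maps `a ↦ (a wⱼ)ⱼ` and
`(bⱼ)ⱼ ↦ ∑ ψ₁(bⱼ) uⱼ` split it off `Bᵐ`, since `ψ₁(a wⱼ) uⱼ = a wⱼ Δ uⱼ`; on the right one uses
`ψ₂` and `a ↦ (uⱼ a)ⱼ` instead. Hence `Δ` is well-tempered exactly when `AΔA = A`, and a nonzero
matrix generates the whole matrix algebra because that algebra is simple. -/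

theorem Module.Projective.of_sum_smul_eq_self {R M ι : Type*} [Semiring R] [AddCommMonoid M]
    [Module R M] [Fintype ι] (f : ι → M →ₗ[R] R) (p : ι → M)
    (h : ∀ x, ∑ i, f i x • p i = x) : Module.Projective R M :=
  .of_split (LinearMap.pi f) (Fintype.linearCombination R p) (LinearMap.ext h)

theorem TwoSidedIdeal.exists_sum_mul_mul_eq_of_mem_span_singleton {R : Type*} [Ring R]
    {a x : R} (hx : x ∈ TwoSidedIdeal.span {a}) :
    ∃ (m : ℕ) (w u : Fin m → R), ∑ j, w j * a * u j = x := by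
  rw [TwoSidedIdeal.mem_span_iff_mem_addSubgroup_closure,
    ← Submodule.span_int_eq_addSubgroupClosure, Submodule.mem_toAddSubgroup,
    Submodule.mem_span_set'] at hx
  obtain ⟨m, c, g, rfl⟩ := hx
  have hg : ∀ j, ∃ w u : R, w * a * u = g j := fun j => by
    obtain ⟨_, ⟨w, -, _, rfl, rfl⟩, u, -, hwu⟩ := (g j).2
    exact ⟨w, u, hwu⟩
  choose w u hwu using hg
  exact ⟨m, fun j => c j • w j, u, Finset.sum_congr rfl fun j _ => by
    rw [smul_mul_assoc, smul_mul_assoc, hwu]⟩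

namespace UnitalHomotope

variable {K : Type v} [CommRing K] {A : Type u} [Ring A] [Algebra K A] (Δ : A)

local notation "B" => UnitalHomotope K A Δ

theorem psi1_inr (a : A) : psi1 K A Δ (Unitization.inr ⟨a⟩) = a * Δ := by
  simp [psi1, phi1]

theorem psi2_inr (a : A) : psi2 K A Δ (Unitization.inr ⟨a⟩) = Δ * a := by
  simp [psi2, phi2]

theorem mul_inr (b : B) (a : A) :
    b * Unitization.inr ⟨a⟩ = Unitization.inr ⟨psi1 K A Δ b * a⟩ := by
  ext
  · simp
  · simp [psi1, phi1, add_mul, Algebra.smul_def]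

theorem inr_mul (a : A) (b : B) :
    Unitization.inr ⟨a⟩ * b = Unitization.inr ⟨a * psi2 K A Δ b⟩ := by
  ext
  · simp
  · simp [psi2, phi2, mul_add, Algebra.smul_def, Algebra.commutes, mul_assoc]

/-- `B⁺ ≅ A` as left `B`-modules, `A` being a `B`-module through `ψ₁`. -/
def plusLeftEquiv : plusLeft K A Δ ≃ₗ[B] A where
  toFun x := (x : B).snd.val
  invFun a := ⟨Unitization.inr ⟨a⟩, Unitization.fst_inr K (⟨a⟩ : Homotope Δ)⟩
  map_add' _ _ := rfl
  map_smul' b x := by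
    obtain ⟨x, hx⟩ := x
    lift x to Homotope Δ using hx
    change (b * Unitization.inr x).snd.val = _
    rw [mul_inr]
    rfl
  left_inv x := by
    obtain ⟨x, hx⟩ := x
    lift x to Homotope Δ using hx
    rfl
  right_inv _ := rfl

instance instModuleOpPsi2 : Module Bᵐᵒᵖ A :=
  Module.compHom A (RingHom.op (psi2 K A Δ).toRingHom)

theorem op_smul_def (b : B) (a : A) : MulOpposite.op b • a = a * psi2 K A Δ b := rfl

/-- `B⁺ ≅ A` as right `B`-modules, `A` being a right `B`-module through `ψ₂`. -/
def plusRightEquiv : plusRight K A Δ ≃ₗ[Bᵐᵒᵖ] A where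
  toFun x := (x : Bᵐᵒᵖ).unop.snd.val
  invFun a := ⟨.op (Unitization.inr ⟨a⟩), Unitization.fst_inr K (⟨a⟩ : Homotope Δ)⟩
  map_add' _ _ := rfl
  map_smul' b x := by
    obtain ⟨⟨x⟩, hx⟩ := x
    lift x to Homotope Δ using hx
    change (Unitization.inr x * b.unop).snd.val = _
    rw [inr_mul]
    rfl
  left_inv x := by
    obtain ⟨⟨x⟩, hx⟩ := x
    lift x to Homotope Δ using hx
    rfl
  right_inv _ := rfl

variable {Δ}

theorem projective_of_sum_mul_mul_eq_one {m : ℕ} {w u : Fin m → A}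
    (h : ∑ j, w j * Δ * u j = 1) : Module.Projective B A := by
  let f (j : Fin m) : A →ₗ[B] B :=
    { toFun a := Unitization.inr ⟨a * w j⟩
      map_add' a a' := by ext <;> simp [add_mul]
      map_smul' b a := by simp [mul_inr, smul_def, mul_assoc] }
  refine .of_sum_smul_eq_self f u fun a => ?_
  simp only [f, LinearMap.coe_mk, AddHom.coe_mk, smul_def, psi1_inr]
  conv_rhs => rw [← mul_one a, ← h, Finset.mul_sum]
  simp only [mul_assoc]

theorem projective_op_of_sum_mul_mul_eq_one {m : ℕ} {w u : Fin m → A}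
    (h : ∑ j, w j * Δ * u j = 1) : Module.Projective Bᵐᵒᵖ A := by
  let f (j : Fin m) : A →ₗ[Bᵐᵒᵖ] Bᵐᵒᵖ :=
    { toFun a := .op (Unitization.inr ⟨u j * a⟩)
      map_add' a a' := by
        rw [← MulOpposite.op_add]
        congr 1
        ext <;> simp [mul_add]
      map_smul' b a := by
        induction b using MulOpposite.rec'
        rw [op_smul_def, RingHom.id_apply, smul_eq_mul, ← MulOpposite.op_mul, inr_mul,
          mul_assoc] }
  refine .of_sum_smul_eq_self f w fun a => ?_
  simp only [f, LinearMap.coe_mk, AddHom.coe_mk, op_smul_def, psi2_inr, ← mul_assoc]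
  rw [← Finset.sum_mul, h, one_mul]

end UnitalHomotope

theorem wellTempered_iff_span_singleton_eq_top {K : Type v} [CommRing K] {A : Type u} [Ring A]
    [Algebra K A] (Δ : A) : WellTempered K A Δ ↔ TwoSidedIdeal.span {Δ} = ⊤ := by
  refine ⟨And.left, fun hspan => ?_⟩
  obtain ⟨m, w, u, h⟩ := TwoSidedIdeal.exists_sum_mul_mul_eq_of_mem_span_singleton
    (by simp [hspan] : (1 : A) ∈ TwoSidedIdeal.span {Δ})
  have := UnitalHomotope.projective_of_sum_mul_mul_eq_one (K := K) h
  have := UnitalHomotope.projective_op_of_sum_mul_mul_eq_one (K := K) h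
  exact ⟨hspan, .of_equiv' (UnitalHomotope.plusLeftEquiv Δ).symm,
    .of_equiv' (UnitalHomotope.plusRightEquiv Δ).symm⟩

/-- Every nonzero element of a matrix algebra over a field is
well-tempered. -/
theorem matrix_wellTempered {k : Type u} [Field k] {n : ℕ} (hn : 0 < n)
    (Δ : Matrix (Fin n) (Fin n) k) (hΔ : Δ ≠ 0) :
    WellTempered k (Matrix (Fin n) (Fin n) k) Δ := by
  have : Nonempty (Fin n) := ⟨⟨0, hn⟩⟩
  rw [wellTempered_iff_span_singleton_eq_top]
  refine (eq_bot_or_eq_top _).resolve_left fun hbot => hΔ ?_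
  simpa [hbot] using TwoSidedIdeal.subset_span (Set.mem_singleton Δ)
end

section
/- Let K be a commutative ring, A a unital K-algebra, Δ ∈ A a well-tempered element, and B = Â_Δ the unital homotope. Let V be a left B-module which is B⁺-trivial, i.e. B⁺·V = 0. Then: (i) every homomorphism of left B-modules from B⁺ to V is zero, i.e. Hom_B(B⁺, V) = 0; (ii) B⁺ ⊗_B V = 0. -/
open scoped TensorProduct

/-! Since `Δ` generates `A` as a two-sided ideal, every element of `A` is a sum of elements
`x Δ z = x ∘ z`, so the products of `A_Δ = B⁺` span it additively. On a product, a `B`-linear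
`f : B⁺ → V` gives `f (x ∘ z) = x • f z = 0`, and in `B⁺ ⊗_B V` we have
`(x ∘ z) ⊗ v = x ⊗ (z • v) = 0`. -/

namespace Homotope

variable {A : Type u} [Ring A] {Δ : A}

theorem eq_top_of_mul_mem (hΔ : TwoSidedIdeal.span ({Δ} : Set A) = ⊤)
    {S : AddSubgroup (Homotope Δ)} (hS : ∀ x y : Homotope Δ, x * y ∈ S) : S = ⊤ := by
  let mkAddHom : A →+ Homotope Δ := AddMonoidHom.mk' Homotope.mk fun _ _ => rfl
  rw [eq_top_iff]
  rintro ⟨a⟩ -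
  have ha : a ∈ TwoSidedIdeal.span ({Δ} : Set A) := hΔ ▸ trivial
  rw [TwoSidedIdeal.mem_span_iff_mem_addSubgroup_closure] at ha
  refine (AddSubgroup.closure_le (K := S.comap mkAddHom)).2 ?_ ha
  rintro _ ⟨_, ⟨x, -, _, rfl, rfl⟩, z, -, rfl⟩
  exact hS ⟨x⟩ ⟨z⟩

end Homotope

namespace UnitalHomotope

variable {K : Type v} [CommRing K] {A : Type u} [Ring A] [Algebra K A] {Δ : A}

theorem inr_mem_plusLeft (a : Homotope Δ) : (a : UnitalHomotope K A Δ) ∈ plusLeft K A Δ :=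
  Unitization.fst_inr K a

variable (K) in
def inrPlusLeft : Homotope Δ →+ plusLeft K A Δ where
  toFun a := ⟨a, inr_mem_plusLeft a⟩
  map_zero' := Subtype.ext (Unitization.inr_zero K)
  map_add' a b := Subtype.ext (Unitization.inr_add K a b)

theorem inrPlusLeft_mul (x y : Homotope Δ) :
    inrPlusLeft K (x * y) = (x : UnitalHomotope K A Δ) • inrPlusLeft K y :=
  Subtype.ext (Unitization.inr_mul K x y)

theorem inrPlusLeft_surjective : Function.Surjective (inrPlusLeft K (Δ := Δ)) := by
  rintro ⟨ξ, hξ⟩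
  exact ⟨ξ.snd, Subtype.ext (Unitization.ext (hξ : ξ.fst = 0).symm rfl)⟩

theorem linearMap_plusLeft_eq_zero (hΔ : TwoSidedIdeal.span ({Δ} : Set A) = ⊤)
    {V : Type*} [AddCommGroup V] [Module (UnitalHomotope K A Δ) V]
    (hV : ∀ (b : Homotope Δ) (v : V), (b : UnitalHomotope K A Δ) • v = 0)
    (f : plusLeft K A Δ →ₗ[UnitalHomotope K A Δ] V) : f = 0 := by
  have hker : (f.toAddMonoidHom.comp (inrPlusLeft K)).ker = ⊤ :=
    Homotope.eq_top_of_mul_mem hΔ fun x y => by simp [inrPlusLeft_mul, hV]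
  ext ξ
  obtain ⟨a, rfl⟩ := inrPlusLeft_surjective ξ
  exact AddMonoidHom.mem_ker.1 (hker.ge (AddSubgroup.mem_top a))

theorem span_tmul_sub_eq_top (hΔ : TwoSidedIdeal.span ({Δ} : Set A) = ⊤)
    (V : Type*) [AddCommGroup V] [Module K V] [Module (UnitalHomotope K A Δ) V]
    (hV : ∀ (b : Homotope Δ) (v : V), (b : UnitalHomotope K A Δ) • v = 0) :
    Submodule.span K {z : Homotope Δ ⊗[K] V | ∃ (x b : Homotope Δ) (v : V),
        z = (x * b) ⊗ₜ[K] v - x ⊗ₜ[K] ((b : UnitalHomotope K A Δ) • v)} = ⊤ := by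
  rw [eq_top_iff, ← TensorProduct.span_tmul_eq_top, Submodule.span_le]
  rintro _ ⟨a, v, rfl⟩
  refine (Homotope.eq_top_of_mul_mem hΔ (S := (Submodule.span K _).toAddSubgroup.comap
    ((TensorProduct.mk K (Homotope Δ) V).flip v).toAddMonoidHom) ?_).ge (AddSubgroup.mem_top a)
  exact fun x y => Submodule.subset_span ⟨x, y, v, by simp [hV]⟩

end UnitalHomotope

open UnitalHomotope in
/-- As `B = K·1 ⊕ B⁺`, the tensor product `B⁺ ⊗_B V` is the quotient of `B⁺ ⊗_K V` by the span
of the elements `(x·b) ⊗ v - x ⊗ (b·v)`, so `B⁺ ⊗_B V = 0` is stated as this span being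
everything. -/
theorem trivial_module_hom_and_tensor_general {K : Type v} [CommRing K] {A : Type u} [Ring A]
    [Algebra K A] (Δ : A) (h : WellTempered K A Δ)
    (V : Type w) [AddCommGroup V] [Module K V] [Module (UnitalHomotope K A Δ) V]
    (hV : ∀ (b : Homotope Δ) (v : V), (Unitization.inr b : UnitalHomotope K A Δ) • v = 0) :
    (∀ f : (plusLeft K A Δ) →ₗ[UnitalHomotope K A Δ] V, f = 0) ∧
      Submodule.span K {z : Homotope Δ ⊗[K] V | ∃ (x b : Homotope Δ) (v : V),
          z = (x * b) ⊗ₜ[K] v - x ⊗ₜ[K] ((Unitization.inr b : UnitalHomotope K A Δ) • v)} =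
        ⊤ :=
  ⟨linearMap_plusLeft_eq_zero h.1 hV, span_tmul_sub_eq_top h.1 V hV⟩

open UnitalHomotope in
/-- Let `Δ` be well-tempered and `V` a `B⁺`-trivial left `B`-module.  Then
(i) every `B`-module homomorphism `B⁺ → V` is zero, and (ii) `B⁺ ⊗_B V = 0`; since
`B = K·1 ⊕ B⁺`, the tensor product `B⁺ ⊗_B V` is the quotient of `B⁺ ⊗_K V` by the span of
the elements `(x·b) ⊗ v - x ⊗ (b·v)` (`x, b ∈ B⁺`, `v ∈ V`), so (ii) says this span is
everything. -/
theorem trivial_module_hom_and_tensor {K : Type v} [CommRing K] {A : Type u} [Ring A]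
    [Algebra K A] (Δ : A) (h : WellTempered K A Δ)
    (V : Type w) [AddCommGroup V] [Module K V] [Module (UnitalHomotope K A Δ) V]
    [IsScalarTower K (UnitalHomotope K A Δ) V]
    (hV : ∀ (b : Homotope Δ) (v : V), (Unitization.inr b : UnitalHomotope K A Δ) • v = 0) :
    (∀ f : (plusLeft K A Δ) →ₗ[UnitalHomotope K A Δ] V, f = 0) ∧
      Submodule.span K {z : Homotope Δ ⊗[K] V | ∃ (x b : Homotope Δ) (v : V),
          z = (x * b) ⊗ₜ[K] v - x ⊗ₜ[K] ((Unitization.inr b : UnitalHomotope K A Δ) • v)} =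
        ⊤ :=
  trivial_module_hom_and_tensor_general Δ h V hV
end
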